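/- arXiv:1312.1397 — 3 statements merged into one kernel-verified Lean document; each statement's English description precedes it below -/
import Mathlib

section
/- A flow allocation vector is an equilibrium point (all time derivatives zero) of the projected flow dynamics if and only if it is a Wardrop equilibrium, i.e., for every path P with r_P > 0, the delay q_P is less than or equal to the delay q_{P'} of every other path P'. -/
open Finset

/-- Projection `{x}_+^{rP}`: equals `0` if `x > 0` and `rP = 0`, else `x`. -/
noncomputable def proj (x rP : ℝ) : ℝ := if 0 < x ∧ rP = 0 then 0 else x

/-- A flow allocation is an equilibrium point (all time derivatives zero) of the
projected flow dynamics if and only if it is a Wardrop equilibrium: every path with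
positive flow has delay no larger than any other path. -/
theorem stmt_1 {P : Type*} [Fintype P] [DecidableEq P]
    (r : P → ℝ)            -- current flow allocation
    (q : P → ℝ)            -- current delay on each path
    (Pm : P)                -- a minimum-delay path
    (d : P → ℝ)            -- the time derivatives prescribed by the dynamics
    (hr : ∀ p, 0 ≤ r p)
    (hmin : ∀ p, q Pm ≤ q p)
    (hd : ∀ p, p ≠ Pm → d p = - proj (q p - q Pm) (r p))
    (hdm : d Pm = - ∑ p ∈ univ.filter (· ≠ Pm), d p) :
    (∀ p, d p = 0) ↔ (∀ p, 0 < r p → ∀ p', q p ≤ q p') := by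
  constructor
  · intro h p hp p'
    by_cases hpm : p = Pm
    · exact hpm ▸ hmin p'
    · have := hd p hpm
      rw [h p] at this
      have hproj : proj (q p - q Pm) (r p) = 0 := by linarith
      unfold proj at hproj
      split_ifs at hproj with hc
      · exact absurd hc.2 (ne_of_gt hp)
      · have : q p ≤ q Pm := by linarith
        exact le_trans this (hmin p')
  · intro h p
    have key : ∀ p, p ≠ Pm → d p = 0 := by
      intro p hpm
      rw [hd p hpm]
      unfold proj
      split_ifs with hc
      · simp
      · push_neg at hc
        rcases (hr p).lt_or_eq with hrp | hrp
        · have := h p hrp Pm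
          have := hmin p
          simp; linarith
        · have h1 : ¬ (0 < q p - q Pm) := fun hx => (hc hx) hrp.symm
          have := hmin p
          simp; linarith
    by_cases hpm : p = Pm
    · rw [hpm, hdm]
      rw [Finset.sum_congr rfl (fun x hx => key x (by simpa using hx))]
      simp
    · exact key p hpm
end

section
/- If each link delay function f_l : ℝ → ℝ is strictly increasing, then the Wardrop equilibrium of the flow allocation problem is unique; equivalently, the convex program minimizing Σ_l ∫_0^{r_l} f_l(s) ds subject to Σ_{P ∈ 𝒫_i} r_P = r_i, r_P ≥ 0, and r_l = Σ_{P ∋ l} r_P, has a unique solution in the link rates. -/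
open Finset

private lemma mid_lt {f : ℝ → ℝ} (hf : StrictMono f)
    (hint : ∀ a b, IntervalIntegrable f MeasureTheory.volume a b)
    {a b : ℝ} (hab : a < b) :
    ∫ s in (0:ℝ)..((a + b) / 2), f s
      < ((∫ s in (0:ℝ)..a, f s) + ∫ s in (0:ℝ)..b, f s) / 2 := by
  set m : ℝ := (a + b) / 2 with hm
  set d : ℝ := (b - a) / 2 with hd
  have hd0 : 0 < d := by simp only [hd]; linarith
  have ham : a < m := by simp only [hm]; linarith
  have hmb : m < b := by simp only [hm]; linarith
  have hadm : a + d = m := by simp only [hm, hd]; ring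
  have hmdb : m + d = b := by simp only [hm, hd]; ring
  have hshift : (∫ s in a..m, f (s + d)) = ∫ s in m..b, f s := by
    rw [intervalIntegral.integral_comp_add_right f d, hadm, hmdb]
  have hint' : IntervalIntegrable (fun s => f (s + d)) MeasureTheory.volume a m := by
    have := (hint (a + d) (m + d)).comp_add_right d
    simpa using this
  have hpos : 0 < ∫ s in a..m, (f (s + d) - f s) := by
    apply intervalIntegral.intervalIntegral_pos_of_pos_on
    · exact hint'.sub (hint a m)
    · intro x _
      have : x < x + d := by linarith
      exact sub_pos.mpr (hf this)
    · exact ham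
  have hsub : (∫ s in a..m, (f (s + d) - f s))
      = (∫ s in a..m, f (s + d)) - ∫ s in a..m, f s :=
    intervalIntegral.integral_sub hint' (hint a m)
  have key : (∫ s in a..m, f s) < ∫ s in m..b, f s := by
    rw [hsub, hshift] at hpos; linarith
  have h1 : (∫ s in (0:ℝ)..a, f s) + ∫ s in a..m, f s = ∫ s in (0:ℝ)..m, f s :=
    intervalIntegral.integral_add_adjacent_intervals (hint 0 a) (hint a m)
  have h2 : (∫ s in (0:ℝ)..m, f s) + ∫ s in m..b, f s = ∫ s in (0:ℝ)..b, f s :=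
    intervalIntegral.integral_add_adjacent_intervals (hint 0 m) (hint m b)
  linarith

private lemma mid_lt' {f : ℝ → ℝ} (hf : StrictMono f)
    (hint : ∀ a b, IntervalIntegrable f MeasureTheory.volume a b)
    {a b : ℝ} (hab : a ≠ b) :
    ∫ s in (0:ℝ)..((a + b) / 2), f s
      < ((∫ s in (0:ℝ)..a, f s) + ∫ s in (0:ℝ)..b, f s) / 2 := by
  rcases lt_or_gt_of_ne hab with h | h
  · exact mid_lt hf hint h
  · have := mid_lt hf hint h
    rw [add_comm b a] at this
    linarith

/-- If each link delay function `f l` is strictly increasing, the convex program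
minimizing `∑ l ∫_0^{r_l} f_l(s) ds` subject to `∑_{P ∈ 𝒫_i} r_P = r_i`, `r_P ≥ 0`,
and `r_l = ∑_{P ∋ l} r_P` has a unique solution in the link rates; i.e. any two
minimizers induce the same link rates (uniqueness of the Wardrop equilibrium). -/
theorem stmt_2 {L Pa ι : Type*} [Fintype L] [Fintype Pa] [Fintype ι] [DecidableEq ι] [DecidableEq Pa]
    (mem : L → Pa → Prop) [∀ l p, Decidable (mem l p)]  -- link l lies on path p
    (src : Pa → ι)          -- the source owning each path
    (rate : ι → ℝ)          -- total rate r_i of each source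
    (f : L → ℝ → ℝ)        -- link delay functions
    (hf : ∀ l, StrictMono (f l))
    (hint : ∀ l a b, IntervalIntegrable (f l) MeasureTheory.volume a b)
    -- feasibility predicate
    (Feas : (Pa → ℝ) → Prop)
    (hFeas : ∀ rP, Feas rP ↔ ((∀ p, 0 ≤ rP p) ∧
      ∀ i, ∑ p ∈ univ.filter (fun p => src p = i), rP p = rate i))
    -- link rate and objective
    (linkRate : (Pa → ℝ) → L → ℝ)
    (hlink : ∀ rP l, linkRate rP l = ∑ p ∈ univ.filter (fun p => mem l p), rP p)
    (obj : (Pa → ℝ) → ℝ)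
    (hobj : ∀ rP, obj rP = ∑ l, ∫ s in (0:ℝ)..(linkRate rP l), f l s) :
    ∀ rP rP', Feas rP → Feas rP' →
      (∀ z, Feas z → obj rP ≤ obj z) → (∀ z, Feas z → obj rP' ≤ obj z) →
      ∀ l, linkRate rP l = linkRate rP' l := by
  intro rP rP' h1 h2 hmin1 hmin2 l0
  by_contra hne
  set rM : Pa → ℝ := fun p => (rP p + rP' p) / 2 with hrM
  obtain ⟨h1n, h1s⟩ := (hFeas rP).1 h1
  obtain ⟨h2n, h2s⟩ := (hFeas rP').1 h2
  have hFeasM : Feas rM := by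
    rw [hFeas]
    constructor
    · intro p
      have := h1n p; have := h2n p
      simp only [hrM]; linarith
    · intro i
      simp only [hrM]
      rw [← Finset.sum_div, Finset.sum_add_distrib, h1s i, h2s i]
      ring
  have hlinkM : ∀ l, linkRate rM l = (linkRate rP l + linkRate rP' l) / 2 := by
    intro l
    rw [hlink, hlink, hlink, ← Finset.sum_div, Finset.sum_add_distrib]
  have hobjeq : obj rP = obj rP' := le_antisymm (hmin1 _ h2) (hmin2 _ h1)
  have hlt : obj rM < (obj rP + obj rP') / 2 := by
    rw [hobj rM, hobj rP, hobj rP', ← Finset.sum_add_distrib, Finset.sum_div]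
    apply Finset.sum_lt_sum
    · intro l _
      rcases eq_or_ne (linkRate rP l) (linkRate rP' l) with h | h
      · rw [hlinkM l, h]
        have : (linkRate rP' l + linkRate rP' l) / 2 = linkRate rP' l := by ring
        rw [this]
        linarith [le_refl (∫ s in (0:ℝ)..(linkRate rP' l), f l s)]
      · rw [hlinkM l]
        exact le_of_lt (mid_lt' (hf l) (hint l) h)
    · exact ⟨l0, Finset.mem_univ l0, by
        rw [hlinkM l0]; exact mid_lt' (hf l0) (hint l0) hne⟩
  have : obj rM < obj rP := by rw [hobjeq] at hlt ⊢; linarith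
  exact absurd (hmin1 rM hFeasM) (not_le.mpr this)
end

section
/- For the M/M/1/K queue drop probability P_d(ρ) = (ρ^K - ρ^{K+1})/(1 - ρ^{K+1}), P_d is strictly increasing in ρ on (0,1) for any integer K ≥ 1, and consequently the expected number of transmissions 1/(1 - P_d(ρ)) = (1 - ρ^{K+1})/(1 - ρ^K) is strictly increasing in ρ on (0,1). -/
lemma sumlem_14 (m n : ℕ) (hm : 1 ≤ m) (hn : 1 ≤ n) (hnm : n ≤ m + 1) {x y : ℝ}
    (hx : 0 < x) (hxy : x < y) :
    x ^ m * ∑ i ∈ Finset.range n, y ^ i < y ^ m * ∑ i ∈ Finset.range n, x ^ i := by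
  have hy : (0:ℝ) < y := hx.trans hxy
  rw [Finset.mul_sum, Finset.mul_sum]
  apply Finset.sum_lt_sum
  · intro i hi
    have him : i ≤ m := by
      have := Finset.mem_range.mp hi; omega
    have h1 : x ^ m = x ^ i * x ^ (m - i) := by rw [← pow_add]; congr 1; omega
    have h2 : y ^ m = y ^ i * y ^ (m - i) := by rw [← pow_add]; congr 1; omega
    have hpow : x ^ (m - i) ≤ y ^ (m - i) := pow_le_pow_left₀ hx.le hxy.le _
    have hnn : (0:ℝ) ≤ x ^ i * y ^ i :=
      mul_nonneg (pow_nonneg hx.le i) (pow_nonneg hy.le i)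
    have := mul_le_mul_of_nonneg_left hpow hnn
    have e1 : x ^ m * y ^ i = x ^ i * y ^ i * x ^ (m - i) := by rw [h1]; ring
    have e2 : y ^ m * x ^ i = x ^ i * y ^ i * y ^ (m - i) := by rw [h2]; ring
    rw [e1, e2]; exact this
  · refine ⟨0, Finset.mem_range.mpr (by omega), ?_⟩
    simp only [pow_zero, mul_one]
    exact pow_lt_pow_left₀ hxy hx.le (by omega)

lemma factor_14 (n : ℕ) (x : ℝ) :
    1 - x ^ n = (1 - x) * ∑ i ∈ Finset.range n, x ^ i := by
  have h := geom_sum_mul x n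
  linear_combination h

/-- For the M/M/1/K queue, the drop probability
`P_d(ρ) = (ρ^K - ρ^{K+1})/(1 - ρ^{K+1})` is strictly increasing on `(0,1)` for `K ≥ 1`,
and consequently the expected number of transmissions
`1/(1 - P_d(ρ)) = (1 - ρ^{K+1})/(1 - ρ^K)` is strictly increasing on `(0,1)`. -/
theorem stmt_14 (K : ℕ) (hK : 1 ≤ K) :
    StrictMonoOn (fun ρ : ℝ => (ρ ^ K - ρ ^ (K + 1)) / (1 - ρ ^ (K + 1)))
      (Set.Ioo (0:ℝ) 1) ∧
    StrictMonoOn (fun ρ : ℝ => (1 - ρ ^ (K + 1)) / (1 - ρ ^ K)) (Set.Ioo (0:ℝ) 1) := by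
  constructor
  · intro x hx y hy hxy
    obtain ⟨hx0, hx1⟩ := hx
    obtain ⟨hy0, hy1⟩ := hy
    have hdx : (0:ℝ) < 1 - x ^ (K + 1) := by
      have := pow_lt_one₀ hx0.le hx1 (n := K + 1) (by omega); linarith
    have hdy : (0:ℝ) < 1 - y ^ (K + 1) := by
      have := pow_lt_one₀ hy0.le hy1 (n := K + 1) (by omega); linarith
    simp only
    rw [div_lt_div_iff₀ hdx hdy]
    have key := sumlem_14 K (K + 1) hK (by omega) (by omega) hx0 hxy
    have hpos : (0:ℝ) < (1 - x) * (1 - y) :=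
      mul_pos (by linarith) (by linarith)
    calc (x ^ K - x ^ (K + 1)) * (1 - y ^ (K + 1))
        = (1 - x) * (1 - y) * (x ^ K * ∑ i ∈ Finset.range (K + 1), y ^ i) := by
          rw [factor_14 (K + 1) y, pow_succ]; ring
      _ < (1 - x) * (1 - y) * (y ^ K * ∑ i ∈ Finset.range (K + 1), x ^ i) :=
          mul_lt_mul_of_pos_left key hpos
      _ = (y ^ K - y ^ (K + 1)) * (1 - x ^ (K + 1)) := by
          rw [factor_14 (K + 1) x, pow_succ]; ring
  · intro x hx y hy hxy
    obtain ⟨hx0, hx1⟩ := hx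
    obtain ⟨hy0, hy1⟩ := hy
    have hdx : (0:ℝ) < 1 - x ^ K := by
      have := pow_lt_one₀ hx0.le hx1 (n := K) (by omega); linarith
    have hdy : (0:ℝ) < 1 - y ^ K := by
      have := pow_lt_one₀ hy0.le hy1 (n := K) (by omega); linarith
    simp only
    rw [div_lt_div_iff₀ hdx hdy]
    have key := sumlem_14 K K hK hK (by omega) hx0 hxy
    have hpos : (0:ℝ) < (1 - x) * (1 - y) :=
      mul_pos (by linarith) (by linarith)
    have key2 : (x ^ K - x ^ (K + 1)) * (1 - y ^ K) < (y ^ K - y ^ (K + 1)) * (1 - x ^ K) :=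
      calc (x ^ K - x ^ (K + 1)) * (1 - y ^ K)
          = (1 - x) * (1 - y) * (x ^ K * ∑ i ∈ Finset.range K, y ^ i) := by
            rw [factor_14 K y, pow_succ]; ring
        _ < (1 - x) * (1 - y) * (y ^ K * ∑ i ∈ Finset.range K, x ^ i) :=
            mul_lt_mul_of_pos_left key hpos
        _ = (y ^ K - y ^ (K + 1)) * (1 - x ^ K) := by
            rw [factor_14 K x, pow_succ]; ring
    nlinarith [key2]
end
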